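/- arXiv:1404.1225 — 3 statements merged into one kernel-verified Lean document; each statement's English description precedes it below -/
import Mathlib

section
/- If two contexts C and D have a common upper bound with respect to ⊑, then they have a least upper bound C ⊔ D (the merge of C and D). -/
/-- First-order terms over signature `F` and variables `V`. -/
inductive Tm (F V : Type) : Type
  | var : V → Tm F V
  | app : F → List (Tm F V) → Tm F V

namespace Tm

variable {F V G : Type}

/-- Applying a substitution to a term. -/
def subst (σ : V → Tm F V) : Tm F V → Tm F V
  | var x => σ x
  | app f ts => app f (ts.attach.map (fun ⟨t, _⟩ => subst σ t))
  decreasing_by · simp only [Tm.app.sizeOf_spec]; have := List.sizeOf_lt_of_mem ‹_›; omega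

/-- List of (occurrences of) variables of a term. -/
def vars : Tm F V → List V
  | var x => [x]
  | app _ ts => ts.attach.flatMap (fun ⟨t, _⟩ => vars t)
  decreasing_by · simp only [Tm.app.sizeOf_spec]; have := List.sizeOf_lt_of_mem ‹_›; omega

/-- Renaming the function symbols of a term. -/
def mapF (g : F → G) : Tm F V → Tm G V
  | var x => var x
  | app f ts => app (g f) (ts.attach.map (fun ⟨t, _⟩ => mapF g t))
  decreasing_by · simp only [Tm.app.sizeOf_spec]; have := List.sizeOf_lt_of_mem ‹_›; omega

/-- The subterm at a position (a list of argument indices), if the position exists. -/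
def sub : List Nat → Tm F V → Option (Tm F V)
  | [], t => some t
  | _ :: _, var _ => none
  | i :: p, app _ ts => ts[i]?.bind (sub p)

/-- Replacing the subterm at a position by another term. -/
def repl : List Nat → Tm F V → Tm F V → Tm F V
  | [], _, u => u
  | _ :: _, var x, _ => var x
  | i :: p, app f ts, u =>
      app f (match ts[i]? with
             | some t => ts.set i (repl p t u)
             | none => ts)

end Tm

/-- A rewrite rule: a pair of terms. -/
structure Rule (F V : Type) where
  lhs : Tm F V
  rhs : Tm F V

/-- The usual variable conditions on a rewrite rule: the left-hand side is
not a variable and all variables of the right-hand side occur in the left-hand side. -/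
def WfRule {F V : Type} (ρ : Rule F V) : Prop :=
  (∀ x, ρ.lhs ≠ .var x) ∧ ∀ x, x ∈ ρ.rhs.vars → x ∈ ρ.lhs.vars

/-- `s` rewrites to `t` at position `p` using rule `ρ`. -/
def StepAt {F V : Type} (p : List Nat) (ρ : Rule F V) (s t : Tm F V) : Prop :=
  ∃ σ : V → Tm F V, Tm.sub p s = some (Tm.subst σ ρ.lhs) ∧ t = Tm.repl p s (Tm.subst σ ρ.rhs)

/-- The rewrite relation of a TRS (set of rules). -/
def Step {F V : Type} (R : Set (Rule F V)) (s t : Tm F V) : Prop :=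
  ∃ ρ ∈ R, ∃ p, StepAt p ρ s t

/-- `l` matches `t`: some substitution instance of `l` equals `t`. -/
def Matches {F V : Type} (l t : Tm F V) : Prop :=
  ∃ σ : V → Tm F V, Tm.subst σ l = t

/-- Reflexive-transitive closure of rewriting. -/
abbrev Steps {F V : Type} (R : Set (Rule F V)) : Tm F V → Tm F V → Prop :=
  Relation.ReflTransGen (Step R)

/-- Confluence on a set of terms. -/
def ConfluentOn {F V : Type} (R : Set (Rule F V)) (T : Set (Tm F V)) : Prop :=
  ∀ s ∈ T, ∀ t u, Steps R s t → Steps R s u → ∃ v, Steps R t v ∧ Steps R u v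

/-- Confluence (on all terms). -/
def Confluent {F V : Type} (R : Set (Rule F V)) : Prop :=
  ConfluentOn R Set.univ

/-- A relation is terminating if it admits no infinite sequences, i.e., its
inverse is well-founded. -/
def TerminatingRel {α : Type} (r : α → α → Prop) : Prop :=
  WellFounded (fun a b => r b a)

/-- One step of `A` relative to `B`: `→B* · →A · →B*`. -/
def RelStep {F V : Type} (A B : Set (Rule F V)) (s t : Tm F V) : Prop :=
  ∃ s' t', Steps B s s' ∧ Step A s' t' ∧ Steps B t' t

/-- Relative termination of `A/B`. -/
def RelTerminating {F V : Type} (A B : Set (Rule F V)) : Prop :=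
  TerminatingRel (RelStep A B)
/-- Contexts over `F` and `V`: terms over the signature extended with a
fresh hole constant (`Sum.inr ()`). -/
abbrev Ctx (F V : Type) := Tm (F ⊕ Unit) V

/-- The empty context (the hole). -/
def hole {F V : Type} : Ctx F V := Tm.app (Sum.inr ()) []

/-- A context with no holes, i.e., a term. -/
def noHole {F V : Type} (C : Ctx F V) : Prop :=
  ∀ p : List Nat, Tm.sub p C ≠ some (hole (F := F) (V := V))

/-- `p` is a position of `C` whose root is a function symbol (not a hole, not a variable). -/
def funPos {F V : Type} (p : List Nat) (C : Ctx F V) : Prop :=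
  ∃ (f : F) (ts : List (Ctx F V)), Tm.sub p C = some (Tm.app (Sum.inl f) ts)

/-- The partial order `⊑` on contexts: the smallest reflexive transitive
monotone relation with `hole ⊑ C` for every context `C`. -/
inductive CLe {F V : Type} : Ctx F V → Ctx F V → Prop
  | refl (C : Ctx F V) : CLe C C
  | hole (C : Ctx F V) : CLe hole C
  | trans {C D E : Ctx F V} : CLe C D → CLe D E → CLe C E
  | mono (f : F ⊕ Unit) {Cs Ds : List (Ctx F V)} :
      List.Forall₂ CLe Cs Ds → CLe (Tm.app f Cs) (Tm.app f Ds)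

/-- `M` is the merge (supremum w.r.t. `⊑`) of `C` and `D`. -/
def IsMerge {F V : Type} (C D M : Ctx F V) : Prop :=
  CLe C M ∧ CLe D M ∧ ∀ E, CLe C E → CLe D E → CLe M E

/-- `L` is a top of `C` according to `𝕃`. -/
def TopOf {F V : Type} (𝕃 : Set (Ctx F V)) (C L : Ctx F V) : Prop :=
  L ∈ 𝕃 ∧ CLe L C

/-- `M` is a max-top of `C` according to `𝕃`: a top maximal w.r.t. `⊑`. -/
def MaxTopOf {F V : Type} (𝕃 : Set (Ctx F V)) (C M : Ctx F V) : Prop :=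
  TopOf 𝕃 C M ∧ ∀ L, TopOf 𝕃 C L → CLe M L → L = M

/-- A layer system: a set of contexts satisfying (L1), (L2) and (L3). -/
structure LayerSystem {F V : Type} (𝕃 : Set (Ctx F V)) : Prop where
  /-- (L1): every term has a non-empty top. -/
  L1 : ∀ t : Ctx F V, noHole t → ∃ L, TopOf 𝕃 t L ∧ L ≠ hole
  /-- (L2): `C[x]_p ∈ 𝕃` iff `C[□]_p ∈ 𝕃`. -/
  L2 : ∀ (C : Ctx F V) (p : List Nat) (x : V), (Tm.sub p C).isSome →
        (Tm.repl p C (Tm.var x) ∈ 𝕃 ↔ Tm.repl p C hole ∈ 𝕃)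
  /-- (L3): layers are closed under merging at function positions. -/
  L3 : ∀ L ∈ 𝕃, ∀ N ∈ 𝕃, ∀ (p : List Nat) (Lp M : Ctx F V),
        funPos p L → Tm.sub p L = some Lp → IsMerge Lp N M → Tm.repl p L M ∈ 𝕃

/-- Condition (W): rewrite steps at function positions of the max-top can be
mirrored on the max-top, yielding a layer. -/
def CondW {F V : Type} (R : Set (Rule (F ⊕ Unit) V)) (𝕃 : Set (Ctx F V)) : Prop :=
  ∀ (s M : Ctx F V) (p : List Nat) (ρ : Rule (F ⊕ Unit) V) (t : Ctx F V),
    noHole s → MaxTopOf 𝕃 s M → funPos p M → ρ ∈ R → StepAt p ρ s t →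
    ∃ L ∈ 𝕃, StepAt p ρ M L

/-- Condition (C1): in (W), the resulting layer is the max-top of `t` or empty. -/
def CondC1 {F V : Type} (R : Set (Rule (F ⊕ Unit) V)) (𝕃 : Set (Ctx F V)) : Prop :=
  ∀ (s M : Ctx F V) (p : List Nat) (ρ : Rule (F ⊕ Unit) V) (t L : Ctx F V),
    noHole s → MaxTopOf 𝕃 s M → funPos p M → ρ ∈ R → StepAt p ρ s t →
    StepAt p ρ M L → L ∈ 𝕃 → (L = hole ∨ MaxTopOf 𝕃 t L)

/-- Condition (C2): if `L ⊑ N` are layers then filling a hole of `L` with the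
corresponding subcontext of `N` yields a layer. -/
def CondC2 {F V : Type} (𝕃 : Set (Ctx F V)) : Prop :=
  ∀ L ∈ 𝕃, ∀ N ∈ 𝕃, CLe L N → ∀ (p : List Nat) (Np : Ctx F V),
    Tm.sub p L = some (hole (F := F) (V := V)) → Tm.sub p N = some Np →
    Tm.repl p L Np ∈ 𝕃

/-- A TRS is weakly layered according to `𝕃` if (W) holds. -/
def WeaklyLayered {F V : Type} (R : Set (Rule (F ⊕ Unit) V)) (𝕃 : Set (Ctx F V)) : Prop :=
  CondW R 𝕃

/-- A TRS is layered according to `𝕃` if (W), (C1) and (C2) hold. -/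
def Layered {F V : Type} (R : Set (Rule (F ⊕ Unit) V)) (𝕃 : Set (Ctx F V)) : Prop :=
  CondW R 𝕃 ∧ CondC1 R 𝕃 ∧ CondC2 𝕃

/-- `HasRank 𝕃 t n`: the rank of `t` (according to the layer system `𝕃`) is `n`,
i.e., `n = 1 + max` of the ranks of the aliens of `t` (the subterms at the hole
positions of the max-top of `t`). -/
inductive HasRank {F V : Type} (𝕃 : Set (Ctx F V)) : Ctx F V → Nat → Prop
  | intro (t M : Ctx F V) (n : Nat) (rk : List Nat → Nat) :
      MaxTopOf 𝕃 t M →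
      (∀ (p : List Nat) (tp : Ctx F V), Tm.sub p M = some hole → Tm.sub p t = some tp →
        HasRank 𝕃 tp (rk p)) →
      (∀ p : List Nat, Tm.sub p M = some hole → rk p ≤ n) →
      (n = 0 ∨ ∃ (p : List Nat) (tp : Ctx F V), Tm.sub p M = some hole ∧
        Tm.sub p t = some tp ∧ rk p = n) →
      HasRank 𝕃 t (n + 1)

/-!
Inverting the inductive definition of `⊑` shows that `C ⊑ D` holds exactly when `C` is the hole,
or `C` and `D` are the same variable, or they have the same root symbol and the arguments of `C`
lie pointwise below those of `D`. So two contexts below a common bound `E` are either the hole, in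
which case the other one is the merge, or both have the root of `E`; their merge then has that
root and, as arguments, the merges of the corresponding arguments, obtained by recursion on `E`.
-/

theorem List.Forall₂.trans {α : Type*} {r : α → α → Prop} [IsTrans α r] :
    ∀ {l₁ l₂ l₃ : List α}, Forall₂ r l₁ l₂ → Forall₂ r l₂ l₃ → Forall₂ r l₁ l₃
  | _, _, _, .nil, .nil => .nil
  | _, _, _, .cons h₁ hs₁, .cons h₂ hs₂ => .cons (_root_.trans h₁ h₂) (hs₁.trans hs₂)

section Contexts

variable {F V : Type}

instance : IsTrans (Ctx F V) CLe := ⟨fun _ _ _ => CLe.trans⟩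

theorem eq_hole_or_same_root_of_cle {C D : Ctx F V} (h : CLe C D) :
    C = hole ∨ (∃ x, C = .var x ∧ D = .var x) ∨
      ∃ f Cs Ds, C = .app f Cs ∧ D = .app f Ds ∧ List.Forall₂ CLe Cs Ds := by
  refine CLe.rec (motive_2 := fun _ _ _ => True) ?_ (fun _ => .inl rfl) ?_
    (fun f Cs Ds hF _ => .inr (.inr ⟨f, Cs, Ds, rfl, rfl, hF⟩)) trivial
    (fun _ _ _ _ => trivial) h
  · rintro (x | ⟨f, Cs⟩)
    · exact .inr (.inl ⟨x, rfl, rfl⟩)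
    · exact .inr (.inr ⟨f, Cs, Cs, rfl, rfl, List.forall₂_same.2 fun C _ => CLe.refl C⟩)
  · rintro C D E - - (hC | ⟨x, rfl, rfl⟩ | ⟨f, Cs, Ds, rfl, rfl, hCD⟩) hDE
    · exact .inl hC
    · rcases hDE with hD | ⟨y, hy, rfl⟩ | ⟨g, Ds, Es, hD, -, -⟩
      · cases hD
      · exact .inr (.inl ⟨x, rfl, hy ▸ rfl⟩)
      · cases hD
    · rcases hDE with hD | ⟨y, hD, -⟩ | ⟨g, Ds', Es, hD, rfl, hDE⟩
      · obtain ⟨rfl, rfl⟩ := Tm.app.inj hD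
        obtain rfl := List.forall₂_nil_right_iff.mp hCD
        exact .inl rfl
      · cases hD
      · obtain ⟨rfl, rfl⟩ := Tm.app.inj hD
        exact .inr (.inr ⟨f, Cs, Es, rfl, rfl, hCD.trans hDE⟩)

theorem eq_hole_or_eq_of_cle_var {C : Ctx F V} {x : V} (h : CLe C (.var x)) :
    C = hole ∨ C = .var x := by
  rcases eq_hole_or_same_root_of_cle h with hC | ⟨y, rfl, hy⟩ | ⟨g, Cs, Ds, -, hD, -⟩
  · exact .inl hC
  · exact .inr hy.symm
  · cases hD

theorem eq_hole_or_exists_of_cle_app {C : Ctx F V} {f : F ⊕ Unit} {Es : List (Ctx F V)}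
    (h : CLe C (.app f Es)) : C = hole ∨ ∃ Cs, C = .app f Cs ∧ List.Forall₂ CLe Cs Es := by
  rcases eq_hole_or_same_root_of_cle h with hC | ⟨y, -, hy⟩ | ⟨g, Cs, Ds, rfl, hD, hCD⟩
  · exact .inl hC
  · cases hy
  · obtain ⟨rfl, rfl⟩ := Tm.app.inj hD
    exact .inr ⟨Cs, rfl, hCD⟩

theorem exists_of_app_cle {f : F ⊕ Unit} {Cs : List (Ctx F V)} {E : Ctx F V}
    (h : CLe (.app f Cs) E) (hC : .app f Cs ≠ hole) :
    ∃ Es, E = .app f Es ∧ List.Forall₂ CLe Cs Es := by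
  rcases eq_hole_or_same_root_of_cle h with hC' | ⟨y, hy, -⟩ | ⟨g, Cs', Es, hCs, rfl, hCE⟩
  · exact absurd hC' hC
  · cases hy
  · obtain ⟨rfl, rfl⟩ := Tm.app.inj hCs
    exact ⟨Es, rfl, hCE⟩

theorem isMerge_self (C : Ctx F V) : IsMerge C C C :=
  ⟨CLe.refl C, CLe.refl C, fun _ h _ => h⟩

theorem isMerge_hole_left (D : Ctx F V) : IsMerge hole D D :=
  ⟨CLe.hole D, CLe.refl D, fun _ _ h => h⟩

theorem isMerge_hole_right (C : Ctx F V) : IsMerge C hole C :=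
  ⟨CLe.refl C, CLe.hole C, fun _ h _ => h⟩

def IsMergeList (Cs Ds Ms : List (Ctx F V)) : Prop :=
  List.Forall₂ CLe Cs Ms ∧ List.Forall₂ CLe Ds Ms ∧
    ∀ Es, List.Forall₂ CLe Cs Es → List.Forall₂ CLe Ds Es → List.Forall₂ CLe Ms Es

theorem IsMergeList.nil : IsMergeList ([] : List (Ctx F V)) [] [] :=
  ⟨.nil, .nil, fun _ h _ => h⟩

theorem IsMergeList.cons {C D M : Ctx F V} {Cs Ds Ms : List (Ctx F V)} (h : IsMerge C D M)
    (hs : IsMergeList Cs Ds Ms) : IsMergeList (C :: Cs) (D :: Ds) (M :: Ms) := by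
  refine ⟨.cons h.1 hs.1, .cons h.2.1 hs.2.1, ?_⟩
  rintro _ (_ | ⟨hCE, hCsEs⟩) (_ | ⟨hDE, hDsEs⟩)
  exact .cons (h.2.2 _ hCE hDE) (hs.2.2 _ hCsEs hDsEs)

theorem IsMergeList.isMerge_app {Cs Ds Ms : List (Ctx F V)} (hs : IsMergeList Cs Ds Ms)
    (f : F ⊕ Unit) : IsMerge (.app f Cs) (.app f Ds) (.app f Ms) := by
  have hlen : Cs.length = Ds.length := hs.1.length_eq.trans hs.2.1.length_eq.symm
  -- `hole` is the constant `app (inr ()) []`, so by `hlen` both sides are the hole or neither is.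
  by_cases hC : Tm.app f Cs = hole
  · obtain ⟨rfl, rfl⟩ := Tm.app.inj hC
    obtain rfl := List.length_eq_zero_iff.mp hlen.symm
    obtain rfl := List.forall₂_nil_left_iff.mp hs.1
    exact isMerge_self hole
  have hD : Tm.app f Ds ≠ hole := by
    intro hD
    obtain ⟨rfl, rfl⟩ := Tm.app.inj hD
    exact hC (List.length_eq_zero_iff.mp hlen ▸ rfl)
  refine ⟨.mono f hs.1, .mono f hs.2.1, fun E hCE hDE => ?_⟩
  obtain ⟨Es, rfl, hCsEs⟩ := exists_of_app_cle hCE hC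
  obtain ⟨Es', hEs, hDsEs⟩ := exists_of_app_cle hDE hD
  obtain rfl := (Tm.app.inj hEs).2
  exact .mono f (hs.2.2 Es hCsEs hDsEs)

theorem exists_isMergeList {Cs Ds Es : List (Ctx F V)}
    (hC : List.Forall₂ CLe Cs Es) (hD : List.Forall₂ CLe Ds Es)
    (ih : ∀ E ∈ Es, ∀ {C D : Ctx F V}, CLe C E → CLe D E → ∃ M, IsMerge C D M) :
    ∃ Ms, IsMergeList Cs Ds Ms := by
  induction hC generalizing Ds with
  | nil => exact ⟨[], (List.forall₂_nil_right_iff.mp hD) ▸ IsMergeList.nil⟩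
  | @cons C E Cs Es hCE _ ihs =>
    obtain ⟨D, Ds, hDE, hDsEs, rfl⟩ := List.forall₂_cons_right_iff.mp hD
    obtain ⟨M, hM⟩ := ih E List.mem_cons_self hCE hDE
    obtain ⟨Ms, hMs⟩ := ihs hDsEs fun E' hE' => ih E' (List.mem_cons_of_mem E hE')
    exact ⟨M :: Ms, IsMergeList.cons hM hMs⟩

theorem exists_isMerge_of_cle : ∀ (E : Ctx F V) {C D : Ctx F V},
    CLe C E → CLe D E → ∃ M, IsMerge C D M
  | .var x, C, D, hC, hD => by
    rcases eq_hole_or_eq_of_cle_var hC with rfl | rfl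
    · exact ⟨D, isMerge_hole_left D⟩
    rcases eq_hole_or_eq_of_cle_var hD with rfl | rfl
    · exact ⟨_, isMerge_hole_right _⟩
    exact ⟨_, isMerge_self _⟩
  | .app f Es, C, D, hC, hD => by
    rcases eq_hole_or_exists_of_cle_app hC with rfl | ⟨Cs, rfl, hCs⟩
    · exact ⟨D, isMerge_hole_left D⟩
    rcases eq_hole_or_exists_of_cle_app hD with rfl | ⟨Ds, rfl, hDs⟩
    · exact ⟨_, isMerge_hole_right _⟩
    obtain ⟨Ms, hMs⟩ := exists_isMergeList hCs hDs fun E _ => exists_isMerge_of_cle E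
    exact ⟨_, hMs.isMerge_app f⟩

end Contexts

/-- if two contexts have a common upper bound w.r.t. `⊑`, then
they have a least upper bound (their merge). -/
theorem merge_of_upper_bound (F V : Type) (C D : Ctx F V)
    (h : ∃ E : Ctx F V, CLe C E ∧ CLe D E) :
    ∃ M : Ctx F V, IsMerge C D M := by
  obtain ⟨E, hC, hD⟩ := h
  exact exists_isMerge_of_cle E hC hD
end

section
/- Every non-duplicating TRS R is bounded duplicating, i.e., the relative rewrite system {◇(x) → x} / R is terminating, where ◇ is a fresh unary function symbol. -/
/-- Lift a TRS over `F` to the signature `F ⊕ G` extended with fresh symbols. -/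
def liftTRS {F V : Type} (G : Type) (R : Set (Rule F V)) : Set (Rule (F ⊕ G) V) :=
  { ρ | ∃ ρ₀ ∈ R, ρ = ⟨ρ₀.lhs.mapF Sum.inl, ρ₀.rhs.mapF Sum.inl⟩ }

/-- The rules `◇(x) → x` for a fresh unary symbol `◇` (the `Sum.inr` symbol). -/
def DiamondRules (F V : Type) : Set (Rule (F ⊕ Unit) V) :=
  { ρ | ∃ x : V, ρ = ⟨Tm.app (Sum.inr ()) [Tm.var x], Tm.var x⟩ }

/-- `R` is bounded duplicating: `{◇(x) → x} / R` is terminating. -/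
def BoundedDup {F V : Type} (R : Set (Rule F V)) : Prop :=
  RelTerminating (DiamondRules F V) (liftTRS Unit R)

/-- The rule `⊤ → ⊥` for fresh constants `⊤ = Sum.inr true` and `⊥ = Sum.inr false`. -/
def TopBotRules (F V : Type) : Set (Rule (F ⊕ Bool) V) :=
  { ρ | ρ = ⟨Tm.app (Sum.inr true) [], Tm.app (Sum.inr false) []⟩ }

/-- `R` is weakly bounded duplicating: `{⊤ → ⊥} / R` is terminating. -/
def WeaklyBoundedDup {F V : Type} (R : Set (Rule F V)) : Prop :=
  RelTerminating (TopBotRules F V) (liftTRS Bool R)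

/-!
Weigh a term over `F ⊕ Unit` by its number of `◇` symbols. A `◇`-step removes one `◇`. A step of
the lifted `R` contributes no `◇` of its own, and every `◇` it touches lies in the substitution;
since a non-duplicating rule copies each variable at most as often as it occurs on the left, the
count cannot grow. So the count decreases strictly along every relative step.
-/

theorem List.sum_set_add_of_getElem?_eq {M : Type*} [AddCommMonoid M] :
    ∀ {l : List M} {i : ℕ} {a : M} (b : M), l[i]? = some a → (l.set i b).sum + a = l.sum + b
  | _ :: _, 0, _, _, h => by
    simp only [List.getElem?_cons_zero, Option.some.injEq] at h
    subst h
    simp only [List.set_cons_zero, List.sum_cons]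
    abel
  | _ :: _, _ + 1, _, b, h => by
    simp only [List.set_cons_succ, List.sum_cons, add_assoc,
      List.sum_set_add_of_getElem?_eq b (by simpa using h)]

theorem List.sum_map_le_of_count_le {α : Type*} [DecidableEq α] {l₁ l₂ : List α} (f : α → ℕ)
    (h : ∀ x, l₁.count x ≤ l₂.count x) : (l₁.map f).sum ≤ (l₂.map f).sum := by
  obtain ⟨l, hperm, hsub⟩ := List.subperm_ext_iff.mpr fun x _ => h x
  calc (l₁.map f).sum = (l.map f).sum := (hperm.map f).sum_eq.symm
    _ ≤ (l₂.map f).sum := (hsub.map f).sum_le_sum fun _ _ => Nat.zero_le _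

namespace Tm

variable {F G V : Type}

theorem induction_on {P : Tm F V → Prop} (hvar : ∀ x, P (var x))
    (happ : ∀ f ts, (∀ t ∈ ts, P t) → P (app f ts)) : ∀ t, P t
  | var x => hvar x
  | app f ts => happ f ts fun t _ => induction_on hvar happ t
  decreasing_by simp only [Tm.app.sizeOf_spec]; have := List.sizeOf_lt_of_mem ‹_›; omega

@[simp] theorem subst_var (σ : V → Tm F V) (x : V) : (var x).subst σ = σ x := by
  rw [subst]

@[simp] theorem subst_app (σ : V → Tm F V) (f : F) (ts : List (Tm F V)) :
    (app f ts).subst σ = app f (ts.map (subst σ)) := by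
  rw [subst]; simp

@[simp] theorem vars_var (x : V) : (var x : Tm F V).vars = [x] := by
  rw [vars]

@[simp] theorem vars_app (f : F) (ts : List (Tm F V)) : (app f ts).vars = ts.flatMap vars := by
  rw [vars]; simp

@[simp] theorem mapF_var (g : F → G) (x : V) : (var x : Tm F V).mapF g = var x := by
  rw [mapF]

@[simp] theorem mapF_app (g : F → G) (f : F) (ts : List (Tm F V)) :
    (app f ts).mapF g = app (g f) (ts.map (mapF g)) := by
  rw [mapF]; simp

theorem vars_mapF (g : F → G) (t : Tm F V) : (t.mapF g).vars = t.vars := by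
  induction t using induction_on with
  | hvar x => simp
  | happ f ts ih => simp [List.flatMap, Function.comp_def, List.map_congr_left ih]

def weight (w : F → ℕ) : Tm F V → ℕ
  | var _ => 0
  | app f ts => w f + (ts.attach.map fun ⟨t, _⟩ => weight w t).sum
  decreasing_by simp only [Tm.app.sizeOf_spec]; have := List.sizeOf_lt_of_mem ‹_›; omega

variable (w : F → ℕ)

@[simp] theorem weight_var (x : V) : (var x : Tm F V).weight w = 0 := by
  rw [weight]

@[simp] theorem weight_app (f : F) (ts : List (Tm F V)) :
    (app f ts).weight w = w f + (ts.map (weight w)).sum := by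
  rw [weight]; simp

theorem weight_subst (σ : V → Tm F V) (t : Tm F V) :
    (t.subst σ).weight w = t.weight w + (t.vars.map fun x => (σ x).weight w).sum := by
  induction t using induction_on with
  | hvar x => simp
  | happ f ts ih =>
    simp only [subst_app, weight_app, vars_app, List.flatMap, List.map_flatten, List.sum_flatten,
      List.map_map, Function.comp_def, List.map_congr_left ih, List.sum_map_add, add_assoc]

theorem weight_mapF (g : G → F) (t : Tm G V) : (t.mapF g).weight w = t.weight (w ∘ g) := by
  induction t using induction_on with
  | hvar x => simp
  | happ f ts ih => simp [Function.comp_def, List.map_congr_left ih]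

@[simp] theorem weight_zero (t : Tm F V) : t.weight 0 = 0 := by
  induction t using induction_on with
  | hvar x => simp
  | happ f ts ih => simp [List.map_congr_left ih]

end Tm

section Rewriting

variable {F G V : Type}

def NonDuplicating [DecidableEq V] (R : Set (Rule F V)) : Prop :=
  ∀ ρ ∈ R, ∀ x : V, ρ.rhs.vars.count x ≤ ρ.lhs.vars.count x

-- A context around the redex adds the same weight to both sides of the step.
theorem StepAt.weight_add_le (w : F → ℕ) {ρ : Rule F V} {c : ℕ}
    (hρ : ∀ σ, (ρ.rhs.subst σ).weight w + c ≤ (ρ.lhs.subst σ).weight w) :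
    ∀ {p : List ℕ} {s t : Tm F V}, StepAt p ρ s t → t.weight w + c ≤ s.weight w
  | [], s, t, ⟨σ, hs, ht⟩ => by
    obtain rfl : s = ρ.lhs.subst σ := by simpa [Tm.sub] using hs
    exact ht ▸ hρ σ
  | i :: p, .var _, _, ⟨_, hs, _⟩ => by simp [Tm.sub] at hs
  | i :: p, .app f ts, t, ⟨σ, hs, ht⟩ => by
    obtain ⟨u, hu, hsub⟩ := Option.bind_eq_some_iff.mp hs
    have hstep : StepAt p ρ u (u.repl p (ρ.rhs.subst σ)) := ⟨σ, hsub, rfl⟩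
    have hsum := List.sum_set_add_of_getElem?_eq ((u.repl p (ρ.rhs.subst σ)).weight w)
      (by simp [hu] : (ts.map (Tm.weight w))[i]? = some (u.weight w))
    have ih := hstep.weight_add_le w hρ
    subst ht
    simp only [Tm.repl, hu, Tm.weight_app, ← List.map_set] at hsum ⊢
    omega

theorem weight_subst_mapF_inl (w : G → ℕ) (σ : V → Tm (F ⊕ G) V) (t : Tm F V) :
    ((t.mapF Sum.inl).subst σ).weight (Sum.elim 0 w) =
      (t.vars.map fun x => (σ x).weight (Sum.elim 0 w)).sum := by
  rw [Tm.weight_subst, Tm.weight_mapF, Sum.elim_comp_inl, Tm.weight_zero, Tm.vars_mapF, zero_add]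

theorem Step.weight_le_of_liftTRS [DecidableEq V] {R : Set (Rule F V)} (hR : NonDuplicating R)
    (w : G → ℕ) {s t : Tm (F ⊕ G) V} (h : Step (liftTRS G R) s t) :
    t.weight (Sum.elim 0 w) ≤ s.weight (Sum.elim 0 w) := by
  obtain ⟨_, ⟨ρ, hρ, rfl⟩, p, hstep⟩ := h
  refine hstep.weight_add_le (c := 0) _ fun σ => ?_
  simp only [weight_subst_mapF_inl, add_zero]
  exact List.sum_map_le_of_count_le _ (hR ρ hρ)

theorem Steps.weight_le_of_liftTRS [DecidableEq V] {R : Set (Rule F V)} (hR : NonDuplicating R)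
    (w : G → ℕ) {s t : Tm (F ⊕ G) V} (h : Steps (liftTRS G R) s t) :
    t.weight (Sum.elim 0 w) ≤ s.weight (Sum.elim 0 w) := by
  induction h with
  | refl => rfl
  | tail _ hstep ih => exact (hstep.weight_le_of_liftTRS hR w).trans ih

theorem Step.weight_lt_of_diamondRules {s t : Tm (F ⊕ Unit) V} (h : Step (DiamondRules F V) s t) :
    t.weight (Sum.elim 0 1) < s.weight (Sum.elim 0 1) := by
  obtain ⟨_, ⟨x, rfl⟩, p, hstep⟩ := h
  exact hstep.weight_add_le (c := 1) _ fun σ => by simp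

theorem relTerminating_of_weight {A B : Set (Rule F V)} (w : F → ℕ)
    (hA : ∀ s t, Step A s t → t.weight w < s.weight w)
    (hB : ∀ s t, Steps B s t → t.weight w ≤ s.weight w) : RelTerminating A B := by
  refine (InvImage.wf (Tm.weight w) wellFounded_lt).mono fun t s ⟨_, _, hs, hst, ht⟩ => ?_
  exact (hB _ _ ht).trans_lt ((hA _ _ hst).trans_le (hB _ _ hs))

end Rewriting

theorem nonduplicating_bounded_duplicating_general (F V : Type)
    [DecidableEq V]
    (R : Set (Rule F V))
    (hnd : ∀ ρ ∈ R, ∀ x : V, ρ.rhs.vars.count x ≤ ρ.lhs.vars.count x) :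
    BoundedDup R :=
  relTerminating_of_weight _ (fun _ _ h => h.weight_lt_of_diamondRules)
    (fun _ _ h => h.weight_le_of_liftTRS hnd 1)

/-- every non-duplicating TRS is bounded duplicating. -/
theorem nonduplicating_bounded_duplicating (F V : Type)
    [DecidableEq V] [Countable V] [Infinite V]
    (R : Set (Rule F V)) (hwf : ∀ ρ ∈ R, WfRule ρ)
    (hnd : ∀ ρ ∈ R, ∀ x : V, ρ.rhs.vars.count x ≤ ρ.lhs.vars.count x) :
    BoundedDup R :=
  nonduplicating_bounded_duplicating_general F V R hnd
end

section
/- Let → be the union of relations →_α for α in an index set I equipped with a well-founded order ≻. If every local peak t ←_α s →_β u is decreasing, i.e., t and u are joinable via t →*_{⋎α} · →=_β · →*_{⋎αβ} v ←*_{⋎αβ} · ←=_α · ←*_{⋎β} u (where →_{⋎α₁…αₙ} denotes the union of all →_γ with γ below some αᵢ in ≻), then → is confluent. -/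
/-!
A peak `t ←σ s →τ u` is measured by `lexMax σ + lexMax τ` in the Dershowitz–Manna order, where
`lexMax` is van Oostrom's lexicographic maximum measure. Peel off the first steps `α`, `β` of the
peak, close the local peak `· ←α s →β ·` by its decreasing diagram, and close the two remaining
peaks by induction: every label the diagram introduces is below `α` or `β`, except for a single
`β`-step (resp. `α`-step) taking the place of the one that was peeled off, so both remaining peaks
are smaller. For the pasted diagram to stay decreasing, the induction also bounds the sides of the
valley: the new right side, with the labels below the old left side removed, is at most the old
right side, and symmetrically.
-/

open Relation

namespace Multiset

variable {ι : Type*} [Preorder ι] {M N P M' N' : Multiset ι} {c x : ι}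

def IsDershowitzMannaLE (M N : Multiset ι) : Prop :=
  ∃ X Y Z, M = X + Y ∧ N = X + Z ∧ ∀ y ∈ Y, ∃ z ∈ Z, y < z

theorem isDershowitzMannaLE_iff :
    IsDershowitzMannaLE M N ↔ M = N ∨ IsDershowitzMannaLT M N := by
  constructor
  · rintro ⟨X, Y, Z, rfl, rfl, hYZ⟩
    rcases eq_or_ne Z 0 with rfl | hZ
    · have hY : Y = 0 := eq_zero_of_forall_notMem fun y hy => by simpa using hYZ y hy
      simp [hY]
    · exact .inr ⟨X, Y, Z, hZ, rfl, rfl, hYZ⟩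
  · rintro (rfl | ⟨X, Y, Z, -, rfl, rfl, hYZ⟩)
    · exact ⟨M, 0, 0, by simp, by simp, by simp⟩
    · exact ⟨X, Y, Z, rfl, rfl, hYZ⟩

namespace IsDershowitzMannaLE

theorem of_le (h : M ≤ N) : IsDershowitzMannaLE M N := by
  obtain ⟨Z, rfl⟩ := le_iff_exists_add.1 h
  exact ⟨M, 0, Z, by simp, rfl, by simp⟩

theorem refl (M : Multiset ι) : IsDershowitzMannaLE M M := of_le le_rfl

theorem trans (h₁ : IsDershowitzMannaLE M N) (h₂ : IsDershowitzMannaLE N P) :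
    IsDershowitzMannaLE M P := by
  rw [isDershowitzMannaLE_iff] at *
  rcases h₁ with rfl | h₁
  · exact h₂
  rcases h₂ with rfl | h₂
  · exact .inr h₁
  · exact .inr (h₁.trans h₂)

theorem add (h : IsDershowitzMannaLE M N) (h' : IsDershowitzMannaLE M' N') :
    IsDershowitzMannaLE (M + M') (N + N') := by
  obtain ⟨X, Y, Z, rfl, rfl, hYZ⟩ := h
  obtain ⟨X', Y', Z', rfl, rfl, hYZ'⟩ := h'
  refine ⟨X + X', Y + Y', Z + Z', by abel, by abel, ?_⟩
  simp only [mem_add]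
  rintro y (hy | hy)
  · obtain ⟨z, hz, hyz⟩ := hYZ y hy
    exact ⟨z, .inl hz, hyz⟩
  · obtain ⟨z, hz, hyz⟩ := hYZ' y hy
    exact ⟨z, .inr hz, hyz⟩

theorem add_lt_cons {Y : Multiset ι} (h : IsDershowitzMannaLE M N) (hY : ∀ y ∈ Y, y < c) :
    IsDershowitzMannaLT (M + Y) (c ::ₘ N) := by
  obtain ⟨X, Y', Z, rfl, rfl, hYZ⟩ := h
  refine ⟨X, Y' + Y, c ::ₘ Z, by simp, by abel, by rw [add_cons], ?_⟩
  simp only [mem_add, mem_cons]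
  rintro y (hy | hy)
  · obtain ⟨z, hz, hyz⟩ := hYZ y hy
    exact ⟨z, .inr hz, hyz⟩
  · exact ⟨c, .inl rfl, hY y hy⟩

theorem filter (p : ι → Prop) [DecidablePred p] (hp : ∀ x y, x < y → p x → p y)
    (h : IsDershowitzMannaLE M N) : IsDershowitzMannaLE (M.filter p) (N.filter p) := by
  obtain ⟨X, Y, Z, rfl, rfl, hYZ⟩ := h
  refine ⟨X.filter p, Y.filter p, Z.filter p, filter_add .., filter_add .., fun y hy => ?_⟩
  rw [mem_filter] at hy
  obtain ⟨z, hz, hyz⟩ := hYZ y hy.1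
  exact ⟨z, mem_filter.2 ⟨hz, hp y z hyz hy.2⟩, hyz⟩

theorem exists_le (h : IsDershowitzMannaLE M N) (hx : x ∈ M) : ∃ y ∈ N, x ≤ y := by
  obtain ⟨X, Y, Z, rfl, rfl, hYZ⟩ := h
  rcases mem_add.1 hx with hx | hx
  · exact ⟨x, mem_add.2 (.inl hx), le_rfl⟩
  · obtain ⟨z, hz, hxz⟩ := hYZ x hx
    exact ⟨z, mem_add.2 (.inr hz), hxz.le⟩

end IsDershowitzMannaLE

theorem isDershowitzMannaLE_singleton_iff :
    IsDershowitzMannaLE M {c} ↔ M = {c} ∨ ∀ x ∈ M, x < c := by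
  constructor
  · rintro ⟨X, Y, Z, rfl, hc, hYZ⟩
    have hX : X ≤ {c} := hc ▸ le_add_right X Z
    rcases le_singleton.1 hX with rfl | rfl
    · right
      simp only [zero_add] at hc ⊢
      intro y hy
      obtain ⟨z, hz, hyz⟩ := hYZ y hy
      rwa [← hc, mem_singleton.1 hz] at *
    · left
      have hZ : Z = 0 := by simpa using hc
      have hY : Y = 0 := eq_zero_of_forall_notMem fun y hy => by simpa [hZ] using hYZ y hy
      simp [hY]
  · rintro (rfl | h)
    · exact .refl _
    · exact ⟨0, M, {c}, by simp, by simp, fun y hy => ⟨c, mem_singleton_self c, h y hy⟩⟩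

end Multiset

namespace DecreasingDiagrams

open Multiset

variable {ι α : Type*}

section Measure

variable [Preorder ι] {L K J : List ι} {M N : Multiset ι} {a b c x y : ι}

def Below (L : List ι) (x : ι) : Prop := ∃ y ∈ L, x < y

@[simp] theorem not_below_nil : ¬Below [] x := by simp [Below]

@[simp] theorem below_cons : Below (a :: L) x ↔ x < a ∨ Below L x := by simp [Below]

@[simp] theorem below_append : Below (L ++ K) x ↔ Below L x ∨ Below K x := by
  simp [Below, or_and_right, exists_or]

theorem Below.of_le (hxy : x ≤ y) (h : Below L y) : Below L x :=
  let ⟨z, hz, hyz⟩ := h; ⟨z, hz, hxy.trans_lt hyz⟩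

open Classical in
noncomputable def filterNotBelow (L : List ι) (M : Multiset ι) : Multiset ι :=
  M.filter (¬Below L ·)

theorem mem_filterNotBelow : x ∈ filterNotBelow L M ↔ x ∈ M ∧ ¬Below L x := by
  classical exact mem_filter

@[simp] theorem filterNotBelow_nil : filterNotBelow [] M = M := by simp [filterNotBelow]

@[simp] theorem filterNotBelow_zero : filterNotBelow L 0 = 0 := by
  classical exact filter_zero _

theorem filterNotBelow_add :
    filterNotBelow L (M + N) = filterNotBelow L M + filterNotBelow L N := by
  classical exact filter_add _ _ _

theorem filterNotBelow_filterNotBelow :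
    filterNotBelow K (filterNotBelow L M) = filterNotBelow (K ++ L) M := by
  classical
  simp only [filterNotBelow, filter_filter, below_append, not_or, and_comm]

theorem filterNotBelow_le : filterNotBelow L M ≤ M := by
  classical exact filter_le _ _

theorem filterNotBelow_le_filterNotBelow (h : ∀ x, Below L x → Below K x) :
    filterNotBelow K M ≤ filterNotBelow L M := by
  classical exact monotone_filter_right _ fun x hK hL => hK (h x hL)

theorem exists_eq_filterNotBelow_add (M : Multiset ι) (c : ι) :
    ∃ Y, M = filterNotBelow [c] M + Y ∧ ∀ y ∈ Y, y < c := by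
  classical
  refine ⟨M.filter (Below [c]), by rw [filterNotBelow, add_comm, filter_add_not], fun y hy => ?_⟩
  simpa using (mem_filter.1 hy).2

theorem _root_.Multiset.IsDershowitzMannaLE.filterNotBelow (L : List ι)
    (h : IsDershowitzMannaLE M N) :
    IsDershowitzMannaLE (filterNotBelow L M) (filterNotBelow L N) := by
  classical exact h.filter _ fun _ _ hxy hx hy => hx (hy.of_le hxy.le)

/-- van Oostrom's lexicographic maximum measure: an entry of `L` is kept unless it is below an
earlier one. -/
noncomputable def lexMax : List ι → Multiset ι
  | [] => 0
  | a :: L => a ::ₘ filterNotBelow [a] (lexMax L)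

@[simp] theorem lexMax_nil : lexMax ([] : List ι) = 0 := rfl

theorem lexMax_cons : lexMax (a :: L) = a ::ₘ filterNotBelow [a] (lexMax L) := rfl

theorem lexMax_append : lexMax (L ++ K) = lexMax L + filterNotBelow L (lexMax K) := by
  induction L with
  | nil => simp
  | cons a L ih =>
    rw [List.cons_append, lexMax_cons, lexMax_cons, ih, filterNotBelow_add,
      filterNotBelow_filterNotBelow, List.singleton_append, cons_add]

theorem mem_of_mem_lexMax (hx : x ∈ lexMax L) : x ∈ L := by
  induction L with
  | nil => simp at hx
  | cons a L ih =>
    rcases mem_cons.1 hx with rfl | hx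
    · exact List.mem_cons_self
    · exact List.mem_cons_of_mem _ (ih (mem_of_le filterNotBelow_le hx))

theorem exists_mem_lexMax_le (hx : x ∈ L) : ∃ y ∈ lexMax L, x ≤ y := by
  induction L with
  | nil => simp at hx
  | cons a L ih =>
    rcases List.mem_cons.1 hx with rfl | hx
    · exact ⟨x, mem_cons_self _ _, le_rfl⟩
    obtain ⟨y, hy, hxy⟩ := ih hx
    by_cases hya : y < a
    · exact ⟨a, mem_cons_self _ _, hxy.trans hya.le⟩
    · exact ⟨y, mem_cons_of_mem (mem_filterNotBelow.2 ⟨hy, by simpa using hya⟩), hxy⟩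

theorem below_of_isDershowitzMannaLE
    (h : IsDershowitzMannaLE (filterNotBelow K (lexMax L)) (lexMax J)) (hx : Below L x) :
    Below K x ∨ Below J x := by
  obtain ⟨y, hy, hxy⟩ := hx
  obtain ⟨z, hz, hyz⟩ := exists_mem_lexMax_le hy
  by_cases hKz : Below K z
  · exact .inl (hKz.of_le (hxy.le.trans hyz))
  obtain ⟨w, hw, hzw⟩ := h.exists_le (mem_filterNotBelow.2 ⟨hz, hKz⟩)
  exact .inr ⟨w, mem_of_mem_lexMax hw, (hxy.trans_le hyz).trans_le hzw⟩

theorem isDershowitzMannaLT_cons_of_filterNotBelow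
    (h : IsDershowitzMannaLE (filterNotBelow [c] M) N) :
    IsDershowitzMannaLT M (c ::ₘ N) := by
  obtain ⟨Y, hY, hYc⟩ := exists_eq_filterNotBelow_add M c
  rw [hY]
  exact h.add_lt_cons hYc

theorem isDershowitzMannaLE_add_cons {T T' : Multiset ι} (hT : IsDershowitzMannaLE T {c})
    (hc : ∀ x ∈ T', x < c → c ∉ T) (hT' : IsDershowitzMannaLE (filterNotBelow [c] T') N) :
    IsDershowitzMannaLE (T + T') (c ::ₘ N) := by
  obtain ⟨Y, hY, hYc⟩ := exists_eq_filterNotBelow_add T' c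
  have hTY : IsDershowitzMannaLE (T + Y) {c} := by
    rcases isDershowitzMannaLE_singleton_iff.1 hT with rfl | hT
    · have hY₀ : Y = 0 := eq_zero_of_forall_notMem fun y hy =>
        hc y (hY ▸ mem_add.2 (.inr hy)) (hYc y hy) (mem_singleton_self c)
      simpa [hY₀] using IsDershowitzMannaLE.refl {c}
    · exact isDershowitzMannaLE_singleton_iff.2
        (.inr fun x hx => (mem_add.1 hx).elim (hT x) (hYc x))
  rw [hY, ← singleton_add]
  convert hTY.add hT' using 1
  abel

end Measure

section Diagrams

variable [Preorder ι] {σ τ σ' τ' D E D' : List ι} {a b x : ι}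

def DecreasingSide (a b : ι) (D : List ι) : Prop :=
  ∃ D₁ Dₘ D₂, D = D₁ ++ Dₘ ++ D₂ ∧ (∀ i ∈ D₁, i < a) ∧ Dₘ.Sublist [b] ∧ ∀ i ∈ D₂, i < a ∨ i < b

theorem DecreasingSide.below (hD : DecreasingSide a b D) (hx : Below D x) : x < a ∨ x < b := by
  obtain ⟨D₁, Dₘ, D₂, rfl, h₁, hₘ, h₂⟩ := hD
  obtain ⟨y, hy, hxy⟩ := hx
  rcases List.mem_append.1 hy with hy | hy
  · rcases List.mem_append.1 hy with hy | hy
    · exact .inl (hxy.trans (h₁ y hy))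
    · rw [List.mem_singleton.1 (hₘ.subset hy)] at hxy
      exact .inr hxy
  · exact (h₂ y hy).imp hxy.trans hxy.trans

theorem DecreasingSide.filterNotBelow_lexMax_le (hD : DecreasingSide a b D) :
    IsDershowitzMannaLE (filterNotBelow [a] (lexMax D)) {b} := by
  obtain ⟨D₁, Dₘ, D₂, rfl, h₁, hₘ, h₂⟩ := hD
  have h₀ : filterNotBelow [a] (lexMax D₁) = 0 := eq_zero_of_forall_notMem fun x hx => by
    rw [mem_filterNotBelow] at hx
    exact hx.2 (by simpa using h₁ x (mem_of_mem_lexMax hx.1))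
  rw [lexMax_append, lexMax_append, filterNotBelow_add, filterNotBelow_add, h₀, zero_add,
    ← cons_zero]
  refine isDershowitzMannaLE_add_cons ?_ ?_ ?_
  · refine .of_le (filterNotBelow_le.trans (filterNotBelow_le.trans ?_))
    rcases List.sublist_singleton.1 hₘ with rfl | rfl <;> simp [lexMax_cons]
  · intro x hx hxb hb
    simp only [mem_filterNotBelow] at hx hb
    exact hx.1.2 (below_append.2 (.inr ⟨b, mem_of_mem_lexMax hb.1.1, hxb⟩))
  · convert IsDershowitzMannaLE.refl (0 : Multiset ι)
    refine eq_zero_of_forall_notMem fun x hx => ?_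
    simp only [mem_filterNotBelow, below_cons, not_below_nil, or_false] at hx
    exact (h₂ x (mem_of_mem_lexMax hx.1.1.1)).elim hx.1.2 hx.2

theorem lexMax_add_lt_lexMax_cons_add (hD : DecreasingSide a b D) :
    IsDershowitzMannaLT (lexMax σ + lexMax D) (lexMax (a :: σ) + lexMax (b :: τ)) := by
  rw [lexMax_cons (a := a), cons_add]
  apply isDershowitzMannaLT_cons_of_filterNotBelow
  rw [filterNotBelow_add]
  exact (IsDershowitzMannaLE.refl _).add
    (hD.filterNotBelow_lexMax_le.trans (.of_le (cons_le_cons b (zero_le _))))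

theorem filterNotBelow_lexMax_append_le (hD : DecreasingSide a b D) (hE : DecreasingSide b a E)
    (h : IsDershowitzMannaLE (filterNotBelow D (lexMax σ')) (lexMax σ)) :
    IsDershowitzMannaLE (filterNotBelow [b] (lexMax (E ++ σ'))) (lexMax (a :: σ)) := by
  rw [lexMax_append, filterNotBelow_add, lexMax_cons]
  refine isDershowitzMannaLE_add_cons hE.filterNotBelow_lexMax_le ?_ ?_
  · intro x hx hxa haE
    simp only [mem_filterNotBelow] at hx haE
    exact hx.1.2 ⟨a, mem_of_mem_lexMax haE.1, hxa⟩
  · have h' := h.filterNotBelow [a]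
    simp only [filterNotBelow_filterNotBelow] at h' ⊢
    refine (IsDershowitzMannaLE.of_le (filterNotBelow_le_filterNotBelow fun x hx => ?_)).trans h'
    simp only [below_append, below_cons, not_below_nil, or_false] at hx ⊢
    rcases hx with hx | hx
    · simp [hx]
    · have := hD.below hx
      tauto

theorem lexMax_add_lexMax_append_lt (hD : DecreasingSide a b D) (hE : DecreasingSide b a E)
    (h : IsDershowitzMannaLE (filterNotBelow D (lexMax σ')) (lexMax σ)) :
    IsDershowitzMannaLT (lexMax τ + lexMax (E ++ σ')) (lexMax (a :: σ) + lexMax (b :: τ)) := by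
  rw [lexMax_cons (a := b), add_cons, add_comm]
  apply isDershowitzMannaLT_cons_of_filterNotBelow
  rw [filterNotBelow_add]
  exact (filterNotBelow_lexMax_append_le hD hE h).add (.refl _)

theorem filterNotBelow_cons_lexMax_append_le (hD : DecreasingSide a b D)
    (hE : DecreasingSide b a E)
    (h₁ : IsDershowitzMannaLE (filterNotBelow σ (lexMax D')) (lexMax D))
    (h₂ : IsDershowitzMannaLE (filterNotBelow D (lexMax σ')) (lexMax σ))
    (h₃ : IsDershowitzMannaLE (filterNotBelow (E ++ σ') (lexMax τ')) (lexMax τ)) :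
    IsDershowitzMannaLE (filterNotBelow (a :: σ) (lexMax (D' ++ τ'))) (lexMax (b :: τ)) := by
  rw [lexMax_append, filterNotBelow_add, lexMax_cons]
  refine isDershowitzMannaLE_add_cons ?_ ?_ ?_
  · rw [← List.singleton_append, ← filterNotBelow_filterNotBelow]
    exact (h₁.filterNotBelow [a]).trans hD.filterNotBelow_lexMax_le
  · intro x hx hxb hbD'
    simp only [mem_filterNotBelow] at hx hbD'
    exact hx.1.2 ⟨b, mem_of_mem_lexMax hbD'.1, hxb⟩
  · have h' := h₃.filterNotBelow [b]
    simp only [filterNotBelow_filterNotBelow] at h' ⊢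
    refine (IsDershowitzMannaLE.of_le (filterNotBelow_le_filterNotBelow fun x hx => ?_)).trans h'
    simp only [below_append, below_cons, not_below_nil, or_false] at hx ⊢
    rcases hx with hx | hx | hx
    · simp [hx]
    · have := hE.below hx
      tauto
    · rcases below_of_isDershowitzMannaLE h₂ hx with hx | hx
      · have := hD.below hx
        tauto
      · simp [hx]

end Diagrams

section Reduction

variable {r : ι → α → α → Prop} {L K : List ι} {s t u : α}

inductive Reduction (r : ι → α → α → Prop) : List ι → α → α → Prop
  | nil (a : α) : Reduction r [] a a
  | cons {i : ι} {L : List ι} {a b c : α} :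
      r i a b → Reduction r L b c → Reduction r (i :: L) a c

theorem Reduction.append (h₁ : Reduction r L s t) (h₂ : Reduction r K t u) :
    Reduction r (L ++ K) s u := by
  induction h₁ with
  | nil => exact h₂
  | cons h _ ih => exact .cons h (ih h₂)

theorem Reduction.reflTransGen (h : Reduction r L s t) :
    ReflTransGen (fun x y => ∃ i, r i x y) s t := by
  induction h with
  | nil => exact .refl
  | cons h _ ih => exact .head ⟨_, h⟩ ih

theorem exists_reduction_of_reflTransGen {p : ι → Prop}
    (h : ReflTransGen (fun x y => ∃ i, p i ∧ r i x y) s t) :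
    ∃ L, (∀ i ∈ L, p i) ∧ Reduction r L s t := by
  induction h using ReflTransGen.head_induction_on with
  | refl => exact ⟨[], by simp, .nil _⟩
  | head hst _ ih =>
    obtain ⟨i, hi, hr⟩ := hst
    obtain ⟨L, hL, hred⟩ := ih
    exact ⟨i :: L, List.forall_mem_cons.2 ⟨hi, hL⟩, .cons hr hred⟩

theorem exists_reduction_of_reflGen {i : ι} (h : ReflGen (r i) s t) :
    ∃ L, L.Sublist [i] ∧ Reduction r L s t := by
  rcases h with _ | h
  · exact ⟨[], by simp, .nil _⟩
  · exact ⟨[i], .refl _, .cons h (.nil _)⟩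

end Reduction

section Confluence

variable [Preorder ι] {r : ι → α → α → Prop} {a b : ι} {s t u v : α}

def DecreasingPath (r : ι → α → α → Prop) (a b : ι) (t v : α) : Prop :=
  ∃ t₁ t₂, ReflTransGen (fun x y => ∃ i, i < a ∧ r i x y) t t₁ ∧ ReflGen (r b) t₁ t₂ ∧
    ReflTransGen (fun x y => ∃ i, (i < a ∨ i < b) ∧ r i x y) t₂ v

def LocallyDecreasing (r : ι → α → α → Prop) : Prop :=
  ∀ a b s t u, r a s t → r b s u → ∃ v, DecreasingPath r a b t v ∧ DecreasingPath r b a u v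

theorem DecreasingPath.exists_reduction (h : DecreasingPath r a b t v) :
    ∃ D, DecreasingSide a b D ∧ Reduction r D t v := by
  obtain ⟨t₁, t₂, h₁, h₂, h₃⟩ := h
  obtain ⟨D₁, hD₁, hr₁⟩ := exists_reduction_of_reflTransGen h₁
  obtain ⟨Dₘ, hDₘ, hrₘ⟩ := exists_reduction_of_reflGen h₂
  obtain ⟨D₂, hD₂, hr₂⟩ := exists_reduction_of_reflTransGen h₃
  exact ⟨_, ⟨D₁, Dₘ, D₂, rfl, hD₁, hDₘ, hD₂⟩, (hr₁.append hrₘ).append hr₂⟩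

theorem exists_valley [WellFoundedLT ι] (h : LocallyDecreasing r) :
    ∀ {σ τ : List ι} {s t u : α}, Reduction r σ s t → Reduction r τ s u →
      ∃ v τ' σ', Reduction r τ' t v ∧ Reduction r σ' u v ∧
        IsDershowitzMannaLE (filterNotBelow σ (lexMax τ')) (lexMax τ) ∧
        IsDershowitzMannaLE (filterNotBelow τ (lexMax σ')) (lexMax σ)
  | _, τ, _, _, _, .nil _, hτ =>
    ⟨_, τ, [], hτ, .nil _, by simpa using .refl _, by simpa using .refl 0⟩
  | σ, _, _, _, _, hσ, .nil _ =>
    ⟨_, [], σ, .nil _, hσ, by simpa using .refl 0, by simpa using .refl _⟩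
  | _, _, _, _, _, .cons hα hσ, .cons hβ hτ => by
    obtain ⟨v, hDpath, hEpath⟩ := h _ _ _ _ _ hα hβ
    obtain ⟨D, hD, hDr⟩ := hDpath.exists_reduction
    obtain ⟨E, hE, hEr⟩ := hEpath.exists_reduction
    obtain ⟨w, D', σ', hD', hσ', h₁, h₂⟩ := exists_valley h hσ hDr
    obtain ⟨x, G, τ', hG, hτ', h₃, h₄⟩ := exists_valley h hτ (hEr.append hσ')
    refine ⟨x, D' ++ τ', G, hD'.append hτ', hG,
      filterNotBelow_cons_lexMax_append_le hD hE h₁ h₂ h₄, ?_⟩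
    rw [← List.singleton_append, ← filterNotBelow_filterNotBelow]
    exact (h₃.filterNotBelow _).trans (filterNotBelow_lexMax_append_le hD hE h₂)
termination_by σ τ => lexMax σ + lexMax τ
decreasing_by
  · exact lexMax_add_lt_lexMax_cons_add hD
  · exact lexMax_add_lexMax_append_lt hD hE h₂

theorem confluent_of_locallyDecreasing [WellFoundedLT ι] (h : LocallyDecreasing r)
    (hst : ReflTransGen (fun x y => ∃ i, r i x y) s t)
    (hsu : ReflTransGen (fun x y => ∃ i, r i x y) s u) :
    Join (ReflTransGen (fun x y => ∃ i, r i x y)) t u := by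
  obtain ⟨σ, -, hσ⟩ := exists_reduction_of_reflTransGen (p := fun _ => True) (by simpa using hst)
  obtain ⟨τ, -, hτ⟩ := exists_reduction_of_reflTransGen (p := fun _ => True) (by simpa using hsu)
  obtain ⟨v, τ', σ', hτ', hσ', -⟩ := exists_valley h hσ hτ
  exact ⟨v, hτ'.reflTransGen, hσ'.reflTransGen⟩

end Confluence

end DecreasingDiagrams

/-- van Oostrom's decreasing diagrams theorem: if every local
peak of the union of an `I`-indexed family of relations (with a well-founded
order on `I`) is decreasing, then the union is confluent. -/
theorem decreasing_diagrams {A I : Type} (r : I → A → A → Prop) (lt : I → I → Prop)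
    (hwf : WellFounded lt)
    (hdec : ∀ (α β : I) (s t u : A), r α s t → r β s u →
      ∃ t₁ t₂ v u₁ u₂ : A,
        Relation.ReflTransGen (fun a b => ∃ γ, lt γ α ∧ r γ a b) t t₁ ∧
        Relation.ReflGen (r β) t₁ t₂ ∧
        Relation.ReflTransGen (fun a b => ∃ γ, (lt γ α ∨ lt γ β) ∧ r γ a b) t₂ v ∧
        Relation.ReflTransGen (fun a b => ∃ γ, lt γ β ∧ r γ a b) u u₁ ∧
        Relation.ReflGen (r α) u₁ u₂ ∧
        Relation.ReflTransGen (fun a b => ∃ γ, (lt γ α ∨ lt γ β) ∧ r γ a b) u₂ v) :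
    ∀ s t u : A,
      Relation.ReflTransGen (fun a b => ∃ γ, r γ a b) s t →
      Relation.ReflTransGen (fun a b => ∃ γ, r γ a b) s u →
      ∃ v : A, Relation.ReflTransGen (fun a b => ∃ γ, r γ a b) t v ∧
        Relation.ReflTransGen (fun a b => ∃ γ, r γ a b) u v := by
  have : IsStrictOrder I (TransGen lt) :=
    { irrefl := hwf.transGen.irrefl.irrefl, trans := fun _ _ _ => TransGen.trans }
  let := partialOrderOfSO (TransGen lt)
  have : WellFoundedLT I := ⟨hwf.transGen⟩
  have hloc : DecreasingDiagrams.LocallyDecreasing r := by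
    intro α β s t u hα hβ
    obtain ⟨t₁, t₂, v, u₁, u₂, h₁, h₂, h₃, h₄, h₅, h₆⟩ := hdec α β s t u hα hβ
    refine ⟨v, ⟨t₁, t₂, ReflTransGen.mono ?_ _ _ h₁, h₂, ReflTransGen.mono ?_ _ _ h₃⟩,
      ⟨u₁, u₂, ReflTransGen.mono ?_ _ _ h₄, h₅, ReflTransGen.mono ?_ _ _ h₆⟩⟩ <;>
      rintro x y ⟨γ, hγ, hr⟩
    exacts [⟨γ, .single hγ, hr⟩, ⟨γ, hγ.imp .single .single, hr⟩, ⟨γ, .single hγ, hr⟩,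
      ⟨γ, hγ.symm.imp .single .single, hr⟩]
  exact fun s t u => DecreasingDiagrams.confluent_of_locallyDecreasing hloc
end
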